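/- arXiv:1403.2672 — 2 statements merged into one kernel-verified Lean document; each statement's English description precedes it below -/
import Mathlib

section
/- (Backward wedge growth estimate) Let Φ = {f_t} be a volume-preserving Anosov flow on a closed n-manifold with hyperbolicity constants c > 0, 0 < μ₋ ≤ μ₊ < 1 < λ₋ ≤ λ₊, strong stable bundle E^{ss} of dimension n_s and strong unstable bundle E^{uu} of dimension n_u. Then, with respect to a continuous Riemannian metric in which X, E^{ss}, E^{uu} are mutually orthogonal and X is unit, there are constants L ≥ 1 and b ≥ 1 such that ‖Tf_{-t}(v ∧ w)‖' ≤ L(bc)^{n-3}(μ₊^{n_s-1}λ₊^{n_u-1})^t ‖v ∧ w‖' for all v ∈ E^{ss}, w ∈ E^{uu}, and t ≥ 0. -/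
/-!
Pull `v ∈ E^{ss}_p` and `w ∈ E^{uu}_p` back to `u = Tf_{-t} v` and `u' = Tf_{-t} w` at
`q = f_{-t} p`, and complete `u / ‖u‖`, `u' / ‖u'‖` and `X q` to an orthonormal frame adapted to
`E^{ss}_q ⊕ E^{uu}_q ⊕ E^c_q`. As `f_t` preserves `Ω` and `ω = φ Ω`, the image of this frame has
`ω`-volume `φ p / φ q ≥ m / M`. By Hadamard's inequality that volume is at most the product of the
lengths of the image vectors: `‖v‖ / ‖u‖`, `‖w‖ / ‖u'‖`, `1` for `X p`, and at most `b c μ₊^t`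
resp. `b c λ₊^t` (with `b = b₊ / b₋`) for the remaining `n_s - 1` resp. `n_u - 1` vectors. Since
`u ⊥ u'`, `‖u ∧ u'‖ = ‖u‖ ‖u'‖`, and the estimate follows with `L = M / m`.
-/

open scoped RealInnerProductSpace

/-- The (unsigned) area `‖v ∧ w‖` of the parallelogram spanned by `v` and `w` in an
inner product space, via the Gram determinant. -/
noncomputable def wedgeNorm {E : Type*} [NormedAddCommGroup E]
    [InnerProductSpace ℝ E] (v w : E) : ℝ :=
  Real.sqrt (‖v‖ ^ 2 * ‖w‖ ^ 2 - ⟪v, w⟫ ^ 2)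

open Module

section InnerProductSpace

variable {E : Type*} [NormedAddCommGroup E] [InnerProductSpace ℝ E]

lemma wedgeNorm_of_inner_eq_zero {v w : E} (h : ⟪v, w⟫ = 0) :
    wedgeNorm v w = ‖v‖ * ‖w‖ := by
  rw [wedgeNorm, h, zero_pow two_ne_zero, sub_zero, ← mul_pow,
    Real.sqrt_sq (by positivity)]

lemma Orthonormal.sumElim {ι κ : Type*} {v : ι → E} {w : κ → E} (hv : Orthonormal ℝ v)
    (hw : Orthonormal ℝ w) (hvw : ∀ i j, ⟪v i, w j⟫ = 0) :
    Orthonormal ℝ (Sum.elim v w) := by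
  refine ⟨Sum.forall.2 ⟨hv.1, hw.1⟩, ?_⟩
  rintro (i | i) (j | j) hij
  · exact hv.2 fun h => hij (congrArg Sum.inl h)
  · exact hvw i j
  · rw [Sum.elim_inr, Sum.elim_inl, real_inner_comm]; exact hvw j i
  · exact hw.2 fun h => hij (congrArg Sum.inr h)

lemma exists_orthonormalBasis_apply_eq [FiniteDimensional ℝ E] {ι : Type*} [Fintype ι]
    (hι : finrank ℝ E = Fintype.card ι) (i : ι) {x : E} (hx : ‖x‖ = 1) :
    ∃ b : OrthonormalBasis ι ℝ E, b i = x := by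
  have hx' : Orthonormal ℝ (Set.domRestrict {i} fun _ => x) :=
    orthonormal_subsingleton_iff.2 fun _ => hx
  obtain ⟨b, hb⟩ := hx'.exists_orthonormalBasis_extension_of_card_eq hι
  exact ⟨b, hb i rfl⟩

lemma abs_alternatingMap_le_prod_norm [FiniteDimensional ℝ E] {n : ℕ}
    (hn : finrank ℝ E = n) (ω : AlternatingMap ℝ E ℝ (Fin n))
    (hω : ∀ v : Fin n → E, Orthonormal ℝ v → |ω v| = 1) (x : Fin n → E) :
    |ω x| ≤ ∏ i, ‖x i‖ := by
  have : Fact (finrank ℝ E = n) := ⟨hn⟩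
  let B : OrthonormalBasis (Fin n) ℝ E := (stdOrthonormalBasis ℝ E).reindex (finCongr hn)
  have hB : |ω B.toBasis| = 1 := by simpa using hω B B.orthonormal
  calc |ω x| = |B.toBasis.det x| := by
        rw [ω.eq_smul_basis_det B.toBasis, AlternatingMap.smul_apply, smul_eq_mul, abs_mul, hB,
          one_mul]
    _ = |B.toBasis.orientation.volumeForm x| := (B.toBasis.orientation.volumeForm_robust' B x).symm
    _ ≤ ∏ i, ‖x i‖ := B.toBasis.orientation.abs_volumeForm_apply_le x

lemma Submodule.exists_orthonormal_mul_prod_norm_le (K : Submodule ℝ E) [FiniteDimensional ℝ K]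
    {k : ℕ} (hk : finrank ℝ K = k) {F : Type*} [NormedAddCommGroup F] [NormedSpace ℝ F]
    (T : E →L[ℝ] F) {C : ℝ} (hT : ∀ y ∈ K, ‖T y‖ ≤ C * ‖y‖) {x : E} (hx : x ∈ K) :
    ∃ y : Fin k → E, Orthonormal ℝ y ∧ (∀ i, y i ∈ K) ∧
      ‖x‖ * ∏ i, ‖T (y i)‖ ≤ ‖T x‖ * C ^ (k - 1) := by
  have hcard : finrank ℝ K = Fintype.card (Fin k) := by simpa using hk
  by_cases hx0 : x = 0
  · obtain ⟨b⟩ : Nonempty (OrthonormalBasis (Fin k) ℝ K) :=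
      ⟨(stdOrthonormalBasis ℝ K).reindex (finCongr hk)⟩
    refine ⟨fun i => b i, b.orthonormal.comp_linearIsometry K.subtypeₗᵢ, fun i => (b i).2, ?_⟩
    simp [hx0]
  have hk0 : 0 < k := hk ▸ Module.finrank_pos_iff_exists_ne_zero.2
    ⟨⟨x, hx⟩, fun h => hx0 (congrArg Subtype.val h)⟩
  let i₀ : Fin k := ⟨0, hk0⟩
  obtain ⟨b, hb⟩ := exists_orthonormalBasis_apply_eq hcard i₀
    (x := ⟨‖x‖⁻¹ • x, K.smul_mem _ hx⟩) (by simp [norm_smul, hx0])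
  have hy := b.orthonormal.comp_linearIsometry K.subtypeₗᵢ
  refine ⟨fun i => b i, hy, fun i => (b i).2, ?_⟩
  have hfirst : ‖x‖ * ‖T (b i₀)‖ = ‖T x‖ := by
    rw [hb]
    simp [norm_smul, hx0]
  have hrest : ∏ i ∈ Finset.univ.erase i₀, ‖T (b i)‖ ≤ C ^ (k - 1) := by
    calc ∏ i ∈ Finset.univ.erase i₀, ‖T (b i)‖ ≤ ∏ _i ∈ Finset.univ.erase i₀, C :=
          Finset.prod_le_prod (fun _ _ => norm_nonneg _) fun i _ => by
            simpa [show ‖(b i : E)‖ = 1 from hy.1 i] using hT _ (b i).2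
      _ = C ^ (k - 1) := by simp [Finset.card_erase_of_mem]
  calc ‖x‖ * ∏ i, ‖T (b i)‖ = ‖T x‖ * ∏ i ∈ Finset.univ.erase i₀, ‖T (b i)‖ := by
        rw [← Finset.mul_prod_erase _ _ (Finset.mem_univ i₀), ← mul_assoc, hfirst]
    _ ≤ ‖T x‖ * C ^ (k - 1) := mul_le_mul_of_nonneg_left hrest (norm_nonneg _)

lemma mul_norm_mul_norm_le_of_le_abs_alternatingMap [FiniteDimensional ℝ E] {ns nu : ℕ}
    (hn : finrank ℝ E = ns + nu + 1) (ω : AlternatingMap ℝ E ℝ (Fin (ns + nu + 1)))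
    (hω : ∀ v : Fin (ns + nu + 1) → E, Orthonormal ℝ v → |ω v| = 1)
    (Ks Ku : Submodule ℝ E) (hKs : finrank ℝ Ks = ns) (hKu : finrank ℝ Ku = nu)
    (hKsu : ∀ y ∈ Ks, ∀ z ∈ Ku, ⟪y, z⟫ = 0) {x : E} (hx : ‖x‖ = 1)
    (hxs : ∀ y ∈ Ks, ⟪x, y⟫ = 0) (hxu : ∀ z ∈ Ku, ⟪x, z⟫ = 0)
    (T : E →L[ℝ] E) {δ Cs Cu : ℝ} (hCs : 0 ≤ Cs)
    (hδ : ∀ g : Fin (ns + nu + 1) → E, Orthonormal ℝ g → δ ≤ |ω fun i => T (g i)|)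
    (hTs : ∀ y ∈ Ks, ‖T y‖ ≤ Cs * ‖y‖) (hTu : ∀ z ∈ Ku, ‖T z‖ ≤ Cu * ‖z‖) (hTx : ‖T x‖ ≤ 1)
    {u u' : E} (hu : u ∈ Ks) (hu' : u' ∈ Ku) :
    δ * (‖u‖ * ‖u'‖) ≤ Cs ^ (ns - 1) * Cu ^ (nu - 1) * (‖T u‖ * ‖T u'‖) := by
  obtain ⟨y, hy, hyK, hys⟩ := Ks.exists_orthonormal_mul_prod_norm_le hKs T hTs hu
  obtain ⟨z, hz, hzK, hzu⟩ := Ku.exists_orthonormal_mul_prod_norm_le hKu T hTu hu'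
  let G : (Fin ns ⊕ Fin nu) ⊕ Unit → E := Sum.elim (Sum.elim y z) fun _ => x
  have hG : Orthonormal ℝ G :=
    (hy.sumElim hz fun i j => hKsu _ (hyK i) _ (hzK j)).sumElim
      (orthonormal_subsingleton_iff.2 fun _ => hx) (by
        rintro (i | j) -
        · rw [real_inner_comm]; exact hxs _ (hyK i)
        · rw [real_inner_comm]; exact hxu _ (hzK j))
  let e : Fin (ns + nu + 1) ≃ (Fin ns ⊕ Fin nu) ⊕ Unit := Fintype.equivOfCardEq (by simp)
  have hprod : ∏ i, ‖T (G (e i))‖ ≤ (∏ i, ‖T (y i)‖) * ∏ j, ‖T (z j)‖ := by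
    rw [e.prod_comp (fun j => ‖T (G j)‖), Fintype.prod_sum_type, Fintype.prod_sum_type]
    simpa [G] using mul_le_of_le_one_right (by positivity) hTx
  have hvol : δ ≤ (∏ i, ‖T (y i)‖) * ∏ j, ‖T (z j)‖ :=
    (hδ _ (hG.comp e e.injective)).trans <|
      (abs_alternatingMap_le_prod_norm hn ω hω _).trans hprod
  calc δ * (‖u‖ * ‖u'‖) ≤ (∏ i, ‖T (y i)‖) * (∏ j, ‖T (z j)‖) * (‖u‖ * ‖u'‖) :=
        mul_le_mul_of_nonneg_right hvol (by positivity)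
    _ = (‖u‖ * ∏ i, ‖T (y i)‖) * (‖u'‖ * ∏ j, ‖T (z j)‖) := by ring
    _ ≤ (‖T u‖ * Cs ^ (ns - 1)) * (‖T u'‖ * Cu ^ (nu - 1)) :=
        mul_le_mul hys hzu (by positivity) (by positivity)
    _ = Cs ^ (ns - 1) * Cu ^ (nu - 1) * (‖T u‖ * ‖T u'‖) := by ring

end InnerProductSpace

lemma norm_le_div_mul_mul_norm_of_le_mul {E F : Type*} [SeminormedAddCommGroup E]
    [SeminormedAddCommGroup F] {N₁ : E → ℝ} {N₂ : F → ℝ} {bm bp K : ℝ} (hbm : 0 < bm)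
    (hK : 0 ≤ K) (h₁ : ∀ y, N₁ y ≤ bp * ‖y‖) (h₂ : ∀ z, bm * ‖z‖ ≤ N₂ z) {y : E} {z : F}
    (h : N₂ z ≤ K * N₁ y) : ‖z‖ ≤ bp / bm * K * ‖y‖ := by
  rw [div_mul_eq_mul_div, div_mul_eq_mul_div, le_div_iff₀' hbm]
  calc bm * ‖z‖ ≤ K * N₁ y := (h₂ z).trans h
    _ ≤ K * (bp * ‖y‖) := mul_le_mul_of_nonneg_left (h₁ y) hK
    _ = bp * K * ‖y‖ := by ring

lemma mul_rpow_pow_mul_mul_rpow_pow {a c x y t : ℝ} (hx : 0 ≤ x) (hy : 0 ≤ y) {i j k : ℕ}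
    (hk : k = i + j) :
    (a * (c * x ^ t)) ^ i * (a * (c * y ^ t)) ^ j = (a * c) ^ k * (x ^ i * y ^ j) ^ t := by
  rw [hk, Real.mul_rpow (pow_nonneg hx i) (pow_nonneg hy j), ← Real.rpow_pow_comm hx,
    ← Real.rpow_pow_comm hy]
  ring

lemma AlternatingMap.apply_comp_eq_div_mul {E ι : Type*} [AddCommGroup E] [Module ℝ E]
    {ω Ω₁ Ω₂ : AlternatingMap ℝ E ℝ ι} {a b : ℝ} (hb : b ≠ 0) (h₁ : ∀ v, ω v = a * Ω₁ v)
    (h₂ : ∀ v, ω v = b * Ω₂ v) (T : E → E) (hT : ∀ v, Ω₁ (fun i => T (v i)) = Ω₂ v)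
    (v : ι → E) : ω (fun i => T (v i)) = a / b * ω v := by
  rw [h₁, hT, h₂]
  field_simp

lemma flow_apply_neg {α : Type*} {f : ℝ → α → α} (hf0 : ∀ p, f 0 p = p)
    (hgroup : ∀ s t p, f (s + t) p = f s (f t p)) (t : ℝ) (p : α) : f t (f (-t) p) = p := by
  rw [← hgroup, add_neg_cancel, hf0]

lemma fderiv_flow_apply_fderiv_neg {E : Type*} [NormedAddCommGroup E] [NormedSpace ℝ E]
    {f : ℝ → E → E} (hf0 : ∀ p, f 0 p = p)
    (hgroup : ∀ s t p, f (s + t) p = f s (f t p)) (hdiff : ∀ t, Differentiable ℝ (f t))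
    (t : ℝ) (p x : E) : fderiv ℝ (f t) (f (-t) p) (fderiv ℝ (f (-t)) p x) = x := by
  have hid : f t ∘ f (-t) = id := funext (flow_apply_neg hf0 hgroup t)
  rw [← ContinuousLinearMap.comp_apply, ← fderiv_comp p (hdiff t _) (hdiff (-t) p), hid,
    fderiv_id, ContinuousLinearMap.id_apply]

theorem backward_wedge_growth_estimate_general {E : Type*} [NormedAddCommGroup E]
    [InnerProductSpace ℝ E] [FiniteDimensional ℝ E]
    {n ns nu : ℕ} (hn : Module.finrank ℝ E = n) (hsum : n = ns + nu + 1)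
    (hns : 1 ≤ ns) (hnu : 1 ≤ nu)
    -- the flow and its generator
    (f : ℝ → E → E) (hf0 : ∀ p, f 0 p = p)
    (hgroup : ∀ s t p, f (s + t) p = f s (f t p))
    (hdiff : ∀ t, Differentiable ℝ (f t))
    (X : E → E) (hX : ∀ p, ‖X p‖ = 1)
    (hXgen : ∀ t p, fderiv ℝ (f t) p (X p) = X (f t p))
    -- the invariant splitting TM = E^c ⊕ E^{ss} ⊕ E^{uu}, orthogonal for ⟪·,·⟫
    (Ess Euu : E → Submodule ℝ E)
    (hdims : ∀ p, Module.finrank ℝ (Ess p) = ns ∧ Module.finrank ℝ (Euu p) = nu)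
    (horth : ∀ p, (∀ v ∈ Ess p, ⟪X p, v⟫ = 0) ∧ (∀ w ∈ Euu p, ⟪X p, w⟫ = 0) ∧
      ∀ v ∈ Ess p, ∀ w ∈ Euu p, ⟪v, w⟫ = 0)
    (hinv : ∀ t p, (∀ v ∈ Ess p, fderiv ℝ (f t) p v ∈ Ess (f t p)) ∧
      ∀ w ∈ Euu p, fderiv ℝ (f t) p w ∈ Euu (f t p))
    -- the original Anosov metric `N` and the hyperbolicity constants
    (N : E → E → ℝ) (bm bp : ℝ) (hbm : 0 < bm) (hbp : bm ≤ bp)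
    (hcmp : ∀ p v, bm * ‖v‖ ≤ N p v ∧ N p v ≤ bp * ‖v‖)
    (c μm μp lm lp : ℝ) (hc : 0 < c)
    (hμm : 0 < μm) (hμmp : μm ≤ μp)
    (hlm : 1 < lm) (hlmp : lm ≤ lp)
    (hratess : ∀ p t, 0 ≤ t → ∀ v ∈ Ess p,
      (1 / c) * μm ^ t * N p v ≤ N (f t p) (fderiv ℝ (f t) p v) ∧
        N (f t p) (fderiv ℝ (f t) p v) ≤ c * μp ^ t * N p v)
    (hrateuu : ∀ p t, 0 ≤ t → ∀ w ∈ Euu p,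
      (1 / c) * lm ^ t * N p w ≤ N (f t p) (fderiv ℝ (f t) p w) ∧
        N (f t p) (fderiv ℝ (f t) p w) ≤ c * lp ^ t * N p w)
    -- the preserved volume form `Ω` and the metric volume form `ω = φ·Ω`
    (Ω : E → AlternatingMap ℝ E ℝ (Fin n))
    (hpres : ∀ t p (v : Fin n → E),
      Ω (f t p) (fun i => fderiv ℝ (f t) p (v i)) = Ω p v)
    (ω : AlternatingMap ℝ E ℝ (Fin n))
    (hω : ∀ v : Fin n → E, Orthonormal ℝ v → |ω v| = 1)
    (φ : E → ℝ) (hφpos : ∀ p, 0 < φ p)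
    (hφeq : ∀ p (v : Fin n → E), ω v = φ p * Ω p v)
    (m M : ℝ) (hm : 0 < m) (hφbd : ∀ p, m ≤ φ p ∧ φ p ≤ M) :
    ∃ L : ℝ, 1 ≤ L ∧ ∃ b : ℝ, 1 ≤ b ∧
      ∀ t, 0 ≤ t → ∀ p, ∀ v ∈ Ess p, ∀ w ∈ Euu p,
        wedgeNorm (fderiv ℝ (f (-t)) p v) (fderiv ℝ (f (-t)) p w)
          ≤ L * (b * c) ^ (n - 3) * (μp ^ (ns - 1) * lp ^ (nu - 1)) ^ t *
            wedgeNorm v w := by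
  subst hsum
  have hμp0 : 0 ≤ μp := hμm.le.trans hμmp
  have hlp0 : 0 ≤ lp := zero_le_one.trans (hlm.le.trans hlmp)
  have hbp0 : 0 ≤ bp := hbm.le.trans hbp
  have hM : 0 < M := hm.trans_le ((hφbd 0).1.trans (hφbd 0).2)
  refine ⟨M / m, (one_le_div hm).2 ((hφbd 0).1.trans (hφbd 0).2),
    bp / bm, (one_le_div hbm).2 hbp, fun t ht p v hv w hw => ?_⟩
  set q := f (-t) p
  have hq : f t q = p := flow_apply_neg hf0 hgroup t p
  have hvol : ∀ g, Orthonormal ℝ g → m / M ≤ |ω fun i => fderiv ℝ (f t) q (g i)| := by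
    intro g hg
    rw [AlternatingMap.apply_comp_eq_div_mul (hφpos q).ne' (hφeq p) (hφeq q) (fderiv ℝ (f t) q)
      (fun v => by rw [← hpres t q v, hq]), abs_mul, hω g hg, mul_one,
      abs_of_pos (div_pos (hφpos p) (hφpos q))]
    exact div_le_div₀ (hφpos p).le (hφbd p).1 (hφpos q) (hφbd q).2
  have hu := (hinv (-t) p).1 v hv
  have hu' := (hinv (-t) p).2 w hw
  have hnorms := mul_norm_mul_norm_le_of_le_abs_alternatingMap hn ω hω (Ess q) (Euu q)
    (hdims q).1 (hdims q).2 (horth q).2.2 (hX q) (horth q).1 (horth q).2.1 _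
    (Cs := bp / bm * (c * μp ^ t)) (by positivity) hvol
    (fun y hy => norm_le_div_mul_mul_norm_of_le_mul hbm (by positivity) (fun y => (hcmp q y).2)
      (fun z => (hcmp p z).1) (hq ▸ (hratess q t ht y hy).2))
    (fun z hz => norm_le_div_mul_mul_norm_of_le_mul hbm (by positivity) (fun y => (hcmp q y).2)
      (fun z => (hcmp p z).1) (hq ▸ (hrateuu q t ht z hz).2))
    (by rw [hXgen, hq, hX]) hu hu'
  rw [fderiv_flow_apply_fderiv_neg hf0 hgroup hdiff, fderiv_flow_apply_fderiv_neg hf0 hgroup hdiff,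
    mul_rpow_pow_mul_mul_rpow_pow hμp0 hlp0 (by omega : ns + nu + 1 - 3 = (ns - 1) + (nu - 1)),
    ← le_div_iff₀' (by positivity), div_div_eq_mul_div] at hnorms
  rw [wedgeNorm_of_inner_eq_zero ((horth q).2.2 _ hu _ hu'),
    wedgeNorm_of_inner_eq_zero ((horth p).2.2 v hv w hw)]
  exact hnorms.trans_eq (by ring)

/-- Backward wedge growth estimate for a volume-preserving Anosov flow: with respect to
a metric making `X, E^{ss}, E^{uu}` orthogonal with `X` unit (the inner product on `E`),
there are constants `L ≥ 1` and `b ≥ 1` such that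
`‖Tf_{-t}(v ∧ w)‖' ≤ L (bc)^{n-3} (μ₊^{n_s-1} λ₊^{n_u-1})^t ‖v ∧ w‖'`
for all `v ∈ E^{ss}`, `w ∈ E^{uu}` and `t ≥ 0`. The original Anosov metric is encoded
by the norm function `N` (comparable to `‖·‖` with constants `b₋, b₊`), the preserved
volume form is `Ω`, and `ω` is the Riemannian volume form of the new metric,
`ω = φ·Ω` with `φ` continuous, positive and pinched between `m` and `M`. -/
theorem backward_wedge_growth_estimate {E : Type*} [NormedAddCommGroup E]
    [InnerProductSpace ℝ E] [FiniteDimensional ℝ E]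
    {n ns nu : ℕ} (hn : Module.finrank ℝ E = n) (hsum : n = ns + nu + 1)
    (hns : 1 ≤ ns) (hnu : 1 ≤ nu)
    -- the flow and its generator
    (f : ℝ → E → E) (hf0 : ∀ p, f 0 p = p)
    (hgroup : ∀ s t p, f (s + t) p = f s (f t p))
    (hdiff : ∀ t, Differentiable ℝ (f t))
    (X : E → E) (hX : ∀ p, ‖X p‖ = 1)
    (hXgen : ∀ t p, fderiv ℝ (f t) p (X p) = X (f t p))
    -- the invariant splitting TM = E^c ⊕ E^{ss} ⊕ E^{uu}, orthogonal for ⟪·,·⟫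
    (Ess Euu : E → Submodule ℝ E)
    (hdims : ∀ p, Module.finrank ℝ (Ess p) = ns ∧ Module.finrank ℝ (Euu p) = nu)
    (horth : ∀ p, (∀ v ∈ Ess p, ⟪X p, v⟫ = 0) ∧ (∀ w ∈ Euu p, ⟪X p, w⟫ = 0) ∧
      ∀ v ∈ Ess p, ∀ w ∈ Euu p, ⟪v, w⟫ = 0)
    (hspan : ∀ p, (Submodule.span ℝ {X p} ⊔ Ess p ⊔ Euu p) = ⊤)
    (hinv : ∀ t p, (∀ v ∈ Ess p, fderiv ℝ (f t) p v ∈ Ess (f t p)) ∧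
      ∀ w ∈ Euu p, fderiv ℝ (f t) p w ∈ Euu (f t p))
    -- the original Anosov metric `N` and the hyperbolicity constants
    (N : E → E → ℝ) (bm bp : ℝ) (hbm : 0 < bm) (hbp : bm ≤ bp)
    (hcmp : ∀ p v, bm * ‖v‖ ≤ N p v ∧ N p v ≤ bp * ‖v‖)
    (c μm μp lm lp : ℝ) (hc : 0 < c)
    (hμm : 0 < μm) (hμmp : μm ≤ μp) (hμp : μp < 1)
    (hlm : 1 < lm) (hlmp : lm ≤ lp)
    (hratess : ∀ p t, 0 ≤ t → ∀ v ∈ Ess p,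
      (1 / c) * μm ^ t * N p v ≤ N (f t p) (fderiv ℝ (f t) p v) ∧
        N (f t p) (fderiv ℝ (f t) p v) ≤ c * μp ^ t * N p v)
    (hrateuu : ∀ p t, 0 ≤ t → ∀ w ∈ Euu p,
      (1 / c) * lm ^ t * N p w ≤ N (f t p) (fderiv ℝ (f t) p w) ∧
        N (f t p) (fderiv ℝ (f t) p w) ≤ c * lp ^ t * N p w)
    -- the preserved volume form `Ω` and the metric volume form `ω = φ·Ω`
    (Ω : E → AlternatingMap ℝ E ℝ (Fin n))
    (hpres : ∀ t p (v : Fin n → E),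
      Ω (f t p) (fun i => fderiv ℝ (f t) p (v i)) = Ω p v)
    (ω : AlternatingMap ℝ E ℝ (Fin n))
    (hω : ∀ v : Fin n → E, Orthonormal ℝ v → |ω v| = 1)
    (φ : E → ℝ) (hφpos : ∀ p, 0 < φ p) (hφc : Continuous φ)
    (hφeq : ∀ p (v : Fin n → E), ω v = φ p * Ω p v)
    (m M : ℝ) (hm : 0 < m) (hφbd : ∀ p, m ≤ φ p ∧ φ p ≤ M) :
    ∃ L : ℝ, 1 ≤ L ∧ ∃ b : ℝ, 1 ≤ b ∧
      ∀ t, 0 ≤ t → ∀ p, ∀ v ∈ Ess p, ∀ w ∈ Euu p,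
        wedgeNorm (fderiv ℝ (f (-t)) p v) (fderiv ℝ (f (-t)) p w)
          ≤ L * (b * c) ^ (n - 3) * (μp ^ (ns - 1) * lp ^ (nu - 1)) ^ t *
            wedgeNorm v w :=
  backward_wedge_growth_estimate_general hn hsum hns hnu f hf0 hgroup hdiff X hX hXgen Ess Euu hdims
    horth hinv N bm bp hbm hbp hcmp c μm μp lm lp hc hμm hμmp hlm hlmp hratess hrateuu Ω hpres ω hω
    φ hφpos hφeq m M hm hφbd
end

section
/- (Cancellation in the mixed term) Let ψ₁,…,ψ_ℓ be a smooth partition of unity on M and τ₁,…,τ_ℓ smooth functions with Xτ_i = 1 for all i and |dτ_i(v)| ≤ Aε^θ‖v‖ for all v ∈ E^{ss}, where X is a fixed vector field and E^{ss} a subbundle. Then for ξ₀ = Σψ_i dτ_i and any unit vector v ∈ E^{ss}, |dξ₀(X, v)| ≤ ACε^θ, where C bounds Σ‖dψ_i‖. -/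
/-- Cancellation in the mixed term: for `ξ₀ = Σᵢ ψᵢ dτᵢ` with `Xτᵢ = 1`,
`|dτᵢ(v)| ≤ A ε^θ ‖v‖` on `E^{ss}`, `Σᵢ ‖dψᵢ‖ ≤ C` and `‖X‖ ≤ 1`, one has, for any
unit vector `v ∈ E^{ss}`,
`|dξ₀(X, v)| = |Σᵢ (dψᵢ(X) dτᵢ(v) - dψᵢ(v) dτᵢ(X))| ≤ A C ε^θ`,
using `Σᵢ dψᵢ = 0` (since `Σᵢ ψᵢ ≡ 1`). -/
theorem mixed_term_cancellation {E : Type*} [NormedAddCommGroup E]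
    [InnerProductSpace ℝ E] {ℓ : ℕ}
    (ψ τ : Fin ℓ → E → ℝ)
    (hψs : ∀ i, ContDiff ℝ (⊤ : ℕ∞) (ψ i)) (hτs : ∀ i, ContDiff ℝ (⊤ : ℕ∞) (τ i))
    (hψnn : ∀ i p, 0 ≤ ψ i p) (hψsum : ∀ p, ∑ i, ψ i p = 1)
    (X : E → E) (hXn : ∀ p, ‖X p‖ ≤ 1)
    (Ess : E → Submodule ℝ E)
    (A C ε θ : ℝ) (hA : 0 < A) (hCpos : 0 < C) (hε : 0 < ε)
    (hθ0 : 0 < θ) (hθ1 : θ ≤ 1)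
    (hψd : ∀ p, ∑ i, ‖fderiv ℝ (ψ i) p‖ ≤ C)
    (hXτ : ∀ i p, fderiv ℝ (τ i) p (X p) = 1)
    (hτss : ∀ i p, ∀ v ∈ Ess p, |fderiv ℝ (τ i) p v| ≤ A * ε ^ θ * ‖v‖) :
    ∀ p, ∀ v ∈ Ess p, ‖v‖ = 1 →
      |∑ i, (fderiv ℝ (ψ i) p (X p) * fderiv ℝ (τ i) p v -
        fderiv ℝ (ψ i) p v * fderiv ℝ (τ i) p (X p))| ≤ A * C * ε ^ θ := by
  intro p v hv hv1
  have hdiff : ∀ i, Differentiable ℝ (ψ i) := fun i => (hψs i).differentiable (by simp)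
  -- Σ dψᵢ(p) = 0
  have hsum0 : ∑ i, fderiv ℝ (ψ i) p = 0 := by
    have h1 : fderiv ℝ (fun q => ∑ i, ψ i q) p = ∑ i, fderiv ℝ (ψ i) p := by
      exact fderiv_fun_sum (fun i _ => (hdiff i p))
    have h2 : (fun q => ∑ i, ψ i q) = fun _ => (1 : ℝ) := funext hψsum
    rw [h2] at h1
    rw [← h1, fderiv_fun_const]
    rfl
  have hsum0' : ∑ i, fderiv ℝ (ψ i) p v = 0 := by
    have := congrArg (fun L : E →L[ℝ] ℝ => L v) hsum0
    simpa [ContinuousLinearMap.sum_apply] using this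
  have key : ∑ i, (fderiv ℝ (ψ i) p (X p) * fderiv ℝ (τ i) p v -
      fderiv ℝ (ψ i) p v * fderiv ℝ (τ i) p (X p)) =
      ∑ i, fderiv ℝ (ψ i) p (X p) * fderiv ℝ (τ i) p v := by
    rw [Finset.sum_sub_distrib]
    have : ∑ i, fderiv ℝ (ψ i) p v * fderiv ℝ (τ i) p (X p) = 0 := by
      simp only [hXτ, mul_one]
      exact hsum0'
    rw [this, sub_zero]
  rw [key]
  calc |∑ i, fderiv ℝ (ψ i) p (X p) * fderiv ℝ (τ i) p v|
      ≤ ∑ i, |fderiv ℝ (ψ i) p (X p) * fderiv ℝ (τ i) p v| :=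
        Finset.abs_sum_le_sum_abs _ _
    _ ≤ ∑ i, ‖fderiv ℝ (ψ i) p‖ * (A * ε ^ θ) := by
        apply Finset.sum_le_sum
        intro i _
        rw [abs_mul]
        have h1 : |fderiv ℝ (ψ i) p (X p)| ≤ ‖fderiv ℝ (ψ i) p‖ := by
          calc |fderiv ℝ (ψ i) p (X p)| ≤ ‖fderiv ℝ (ψ i) p‖ * ‖X p‖ :=
                (fderiv ℝ (ψ i) p).le_opNorm _
            _ ≤ ‖fderiv ℝ (ψ i) p‖ * 1 := by
                exact mul_le_mul_of_nonneg_left (hXn p) (norm_nonneg _)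
            _ = ‖fderiv ℝ (ψ i) p‖ := mul_one _
        have h2 : |fderiv ℝ (τ i) p v| ≤ A * ε ^ θ := by
          have := hτss i p v hv
          rwa [hv1, mul_one] at this
        exact mul_le_mul h1 h2 (abs_nonneg _) (norm_nonneg _)
    _ = (∑ i, ‖fderiv ℝ (ψ i) p‖) * (A * ε ^ θ) := by rw [Finset.sum_mul]
    _ ≤ C * (A * ε ^ θ) := by
        apply mul_le_mul_of_nonneg_right (hψd p)
        positivity
    _ = A * C * ε ^ θ := by ring
end
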